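/- Let a > 0 be real and let b ∈ ℂ with |b| < 1 and |a·b| < 1. Let s and r be the principal square roots of 1 - b² and 1 - a²b² respectively (both lie in the open right half-plane, so s and r are well-defined and nonzero). Set x₋ := b/s - a·b/r, y₋ := 1/s - 1/r, and M_n(b) := (i/2)·[[x₋ - 2i, -y₋], [y₋, -x₋ - 2i]] ∈ M₂(ℂ). Then det M_n(b) ≠ 0; in particular M_n(b) is invertible. -/

import Mathlib

/-!
Clearing denominators with `s² = 1 - b²` and `r² = 1 - a²b²` gives the closed form
`det M_n(b) = (s r + 1 - a b²) / (2 s r)`. If the numerator vanished, squaring `s r = a b² - 1`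
would force `b² (1 - a)² = 0`. For `b = 0` the principal roots are `s = r = 1`, and for `a = 1`
they coincide, `s = r`; in both cases `s r = a b² - 1` is impossible.
-/

open Complex

/-- The matrix `M_n(b) = (i/2)·[[x₋ - 2i, -y₋],[y₋, -x₋ - 2i]]` with
`x₋ = b/s - ab/r` and `y₋ = 1/s - 1/r`. -/
noncomputable def Mn (a : ℝ) (b s r : ℂ) : Matrix (Fin 2) (Fin 2) ℂ :=
  (Complex.I / 2) •
    !![(b / s - (a : ℂ) * b / r) - 2 * Complex.I, -(1 / s - 1 / r);
       1 / s - 1 / r, -(b / s - (a : ℂ) * b / r) - 2 * Complex.I]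

namespace Complex

theorem eq_of_sq_eq_sq_of_re_pos {s r : ℂ} (h : s ^ 2 = r ^ 2) (hs : 0 < s.re) (hr : 0 < r.re) :
    s = r := by
  refine (sq_eq_sq_iff_eq_or_eq_neg.mp h).resolve_right fun hsr => ?_
  have : s.re = -r.re := by rw [hsr, neg_re]
  linarith

theorem eq_one_of_sq_eq_one_of_re_pos {s : ℂ} (h : s ^ 2 = 1) (hs : 0 < s.re) : s = 1 :=
  eq_of_sq_eq_sq_of_re_pos (by rw [h, one_pow]) hs (by simp)

end Complex

theorem mul_add_one_sub_mul_sq_ne_zero {a b s r : ℂ}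
    (hs2 : s ^ 2 = 1 - b ^ 2) (hsre : 0 < s.re)
    (hr2 : r ^ 2 = 1 - a ^ 2 * b ^ 2) (hrre : 0 < r.re) :
    s * r + 1 - a * b ^ 2 ≠ 0 := by
  intro h
  have hsq : (b * (1 - a)) ^ 2 = 0 := by
    linear_combination -(s * r - 1 + a * b ^ 2) * h + r ^ 2 * hs2 + (1 - b ^ 2) * hr2
  obtain rfl | ha := mul_eq_zero.mp (pow_eq_zero_iff two_ne_zero |>.mp hsq)
  · have hs : s = 1 := eq_one_of_sq_eq_one_of_re_pos (by simpa using hs2) hsre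
    have hr : r = 1 := eq_one_of_sq_eq_one_of_re_pos (by simpa using hr2) hrre
    norm_num [hs, hr] at h
  · have hsr : s = r := eq_of_sq_eq_sq_of_re_pos
      (by linear_combination hs2 - hr2 - b ^ 2 * (1 + a) * ha) hsre hrre
    subst hsr
    have hs : s ^ 2 = 0 := by linear_combination (h + hs2 - b ^ 2 * ha) / 2
    simp [pow_eq_zero_iff two_ne_zero |>.mp hs] at hsre

theorem Mn_det_eq (a : ℝ) {b s r : ℂ} (hs : s ≠ 0) (hr : r ≠ 0)
    (hs2 : s ^ 2 = 1 - b ^ 2) (hr2 : r ^ 2 = 1 - (a : ℂ) ^ 2 * b ^ 2) :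
    (Mn a b s r).det = (s * r + 1 - a * b ^ 2) / (2 * s * r) := by
  rw [Mn, Matrix.det_smul, Matrix.det_fin_two_of, Fintype.card_fin, div_pow, I_sq]
  field_simp
  linear_combination (-4 * r ^ 2 * s ^ 2) * I_sq + r ^ 2 * hs2 + s ^ 2 * hr2

theorem statement14_general (a : ℝ) (b : ℂ)
    (s r : ℂ)
    (hs2 : s ^ 2 = 1 - b ^ 2) (hsre : 0 < s.re)
    (hr2 : r ^ 2 = 1 - (a : ℂ) ^ 2 * b ^ 2) (hrre : 0 < r.re) :
    (Mn a b s r).det ≠ 0 ∧ IsUnit (Mn a b s r) := by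
  have hs : s ≠ 0 := fun h => by simp [h] at hsre
  have hr : r ≠ 0 := fun h => by simp [h] at hrre
  have hdet : (Mn a b s r).det ≠ 0 := by
    rw [Mn_det_eq a hs hr hs2 hr2]
    exact div_ne_zero (mul_add_one_sub_mul_sq_ne_zero hs2 hsre hr2 hrre) (by simp [hs, hr])
  exact ⟨hdet, (Matrix.isUnit_iff_isUnit_det _).mpr hdet.isUnit⟩

/-- for `a > 0`, `|b| < 1`, `|ab| < 1`, with `s`, `r` the principal
square roots of `1 - b²` and `1 - a²b²` (the unique square roots with positive
real part), `det M_n(b) ≠ 0`; in particular `M_n(b)` is invertible. -/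
theorem statement14 (a : ℝ) (ha : 0 < a) (b : ℂ)
    (hb : ‖b‖ < 1) (hab : ‖(a : ℂ) * b‖ < 1)
    (s r : ℂ)
    (hs2 : s ^ 2 = 1 - b ^ 2) (hsre : 0 < s.re)
    (hr2 : r ^ 2 = 1 - (a : ℂ) ^ 2 * b ^ 2) (hrre : 0 < r.re) :
    (Mn a b s r).det ≠ 0 ∧ IsUnit (Mn a b s r) :=
  statement14_general a b s r hs2 hsre hr2 hrre
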